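/- Under L-smoothness and μ-strong convexity of all local objectives F_k, bounded stochastic gradient variance, and stepsize η_t ≤ 1/(4L), the averaged SGD iterate satisfies E||v̄_{t+1} - w*||^2 ≤ (1 - μη_t) E||w̄_t - w*||^2 + 6Lη_t^2 Γ + 2 E[Σ_k p_k ||w̄_t - w_t^k||^2] + η_t^2 E||g_t - ḡ_t||^2, where Γ = F* - Σ_k p_k F_k* ≥ 0. -/
import Mathlib


open MeasureTheory ProbabilityTheory Finset
open scoped RealInnerProductSpace

set_option maxHeartbeats 1000000

private lemma jensen_normsq {d K : ℕ} (p : Fin K → ℝ) (hp : ∀ k, 0 ≤ p k)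
    (hpsum : ∑ k, p k = 1) (x : Fin K → EuclideanSpace ℝ (Fin d)) :
    ‖∑ k, p k • x k‖ ^ 2 ≤ ∑ k, p k * ‖x k‖ ^ 2 := by
  set xb := ∑ k, p k • x k with hxb
  have hin : ∑ k, p k * ⟪x k, xb⟫ = ‖xb‖ ^ 2 := by
    have h1 : ∑ k, p k * ⟪x k, xb⟫ = ⟪∑ k, p k • x k, xb⟫ := by
      rw [sum_inner]
      exact Finset.sum_congr rfl fun k _ => (real_inner_smul_left _ _ _).symm
    rw [h1, ← hxb, real_inner_self_eq_norm_sq]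
  have h0 : 0 ≤ ∑ k, p k * ‖x k - xb‖ ^ 2 :=
    Finset.sum_nonneg fun k _ => mul_nonneg (hp k) (sq_nonneg _)
  have hexp : ∑ k, p k * ‖x k - xb‖ ^ 2
      = (∑ k, p k * ‖x k‖ ^ 2) - 2 * ‖xb‖ ^ 2 + ‖xb‖ ^ 2 := by
    have h2 : ∀ k, p k * ‖x k - xb‖ ^ 2
        = p k * ‖x k‖ ^ 2 - 2 * (p k * ⟪x k, xb⟫) + p k * ‖xb‖ ^ 2 := by
      intro k; rw [norm_sub_sq_real]; ring
    rw [Finset.sum_congr rfl fun k _ => h2 k, Finset.sum_add_distrib,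
      Finset.sum_sub_distrib, ← Finset.mul_sum, hin, ← Finset.sum_mul, hpsum, one_mul]
  linarith

private lemma det_bound {d K : ℕ}
    (Fk : Fin K → EuclideanSpace ℝ (Fin d) → ℝ)
    (gradFk : Fin K → EuclideanSpace ℝ (Fin d) → EuclideanSpace ℝ (Fin d))
    (Fkstar : Fin K → ℝ) (p : Fin K → ℝ) (L μ η : ℝ)
    (hL : 0 < L) (hμ : 0 < μ) (hη : 0 < η) (hη4L : η ≤ 1 / (4 * L))
    (hp : ∀ k, 0 ≤ p k) (hpsum : ∑ k, p k = 1)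
    (hsmooth : ∀ k v w, Fk k v ≤ Fk k w + ⟪gradFk k w, v - w⟫ + L / 2 * ‖v - w‖ ^ 2)
    (hsc : ∀ k v w, Fk k v ≥ Fk k w + ⟪gradFk k w, v - w⟫ + μ / 2 * ‖v - w‖ ^ 2)
    (hFkstar : ∀ k w, Fkstar k ≤ Fk k w)
    (wstar : EuclideanSpace ℝ (Fin d))
    (hmin : ∀ w, ∑ k, p k * Fk k wstar ≤ ∑ k, p k * Fk k w)
    (wk : Fin K → EuclideanSpace ℝ (Fin d)) :
    ‖((∑ k, p k • wk k) - η • ∑ k, p k • gradFk k (wk k)) - wstar‖ ^ 2 ≤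
      (1 - μ * η) * ‖(∑ k, p k • wk k) - wstar‖ ^ 2 +
        6 * L * η ^ 2 * ((∑ k, p k * Fk k wstar) - ∑ k, p k * Fkstar k) +
        2 * ∑ k, p k * ‖(∑ j, p j • wk j) - wk k‖ ^ 2 := by
  have h4Lη : η * (4 * L) ≤ 1 := (le_div_iff₀ (by positivity)).mp hη4L
  set wbar : EuclideanSpace ℝ (Fin d) := ∑ k, p k • wk k with hwbar
  set gbar : EuclideanSpace ℝ (Fin d) := ∑ k, p k • gradFk k (wk k) with hgbar
  -- gradient norm bound from smoothness
  have hgradsq : ∀ k w, ‖gradFk k w‖ ^ 2 ≤ 2 * L * (Fk k w - Fkstar k) := by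
    intro k w
    have hs := hsmooth k (w - L⁻¹ • gradFk k w) w
    have hv : (w - L⁻¹ • gradFk k w) - w = -(L⁻¹ • gradFk k w) := by abel
    rw [hv, inner_neg_right, real_inner_smul_right, real_inner_self_eq_norm_sq,
      norm_neg, norm_smul, Real.norm_eq_abs, abs_of_pos (by positivity : (0:ℝ) < L⁻¹),
      mul_pow] at hs
    have hs' : Fk k (w - L⁻¹ • gradFk k w) ≤ Fk k w - L⁻¹ / 2 * ‖gradFk k w‖ ^ 2 := by
      have he : Fk k w + -(L⁻¹ * ‖gradFk k w‖ ^ 2) + L / 2 * (L⁻¹ ^ 2 * ‖gradFk k w‖ ^ 2)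
          = Fk k w - L⁻¹ / 2 * ‖gradFk k w‖ ^ 2 := by
        field_simp; ring
      linarith [hs, he.le, he.ge]
    have hstar := hFkstar k (w - L⁻¹ • gradFk k w)
    have hkey : L⁻¹ / 2 * ‖gradFk k w‖ ^ 2 ≤ Fk k w - Fkstar k := by linarith
    calc ‖gradFk k w‖ ^ 2 = 2 * L * (L⁻¹ / 2 * ‖gradFk k w‖ ^ 2) := by field_simp
      _ ≤ 2 * L * (Fk k w - Fkstar k) :=
          mul_le_mul_of_nonneg_left hkey (by positivity)
  -- scalar abbreviations
  set W : ℝ := ‖wbar - wstar‖ ^ 2 with hW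
  set T : ℝ := ∑ k, p k * ‖wbar - wk k‖ ^ 2 with hT
  set Q : ℝ := ∑ k, p k * ‖gradFk k (wk k)‖ ^ 2 with hQ
  set D : ℝ := ∑ k, p k * (Fk k (wk k) - Fkstar k) with hD
  set S : ℝ := ∑ k, p k * (Fk k wbar - Fkstar k) with hS
  set Γ : ℝ := (∑ k, p k * Fk k wstar) - ∑ k, p k * Fkstar k with hΓ
  set P : ℝ := ∑ k, p k * (Fk k (wk k) - Fk k wstar) with hP
  set J : ℝ := ∑ k, p k * ‖wk k - wstar‖ ^ 2 with hJ
  set I : ℝ := ⟪wbar - wstar, gbar⟫ with hI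
  -- expansion of the squared norm
  have hexp : ‖(wbar - η • gbar) - wstar‖ ^ 2 = W - 2 * η * I + η ^ 2 * ‖gbar‖ ^ 2 := by
    have h1 : (wbar - η • gbar) - wstar = (wbar - wstar) - η • gbar := by abel
    rw [h1, norm_sub_sq_real, real_inner_smul_right, norm_smul, Real.norm_eq_abs,
      abs_of_pos hη, mul_pow, hI, hW]
    ring
  -- Jensen bounds
  have hgbQ : ‖gbar‖ ^ 2 ≤ Q := jensen_normsq p hp hpsum _
  have hJW : W ≤ J := by
    have h1 : wbar - wstar = ∑ k, p k • (wk k - wstar) := by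
      rw [hwbar]
      simp [smul_sub, Finset.sum_sub_distrib, ← Finset.sum_smul, hpsum, one_smul]
    rw [hW, h1]
    exact jensen_normsq p hp hpsum _
  -- Q ≤ 2 L D
  have hQD : Q ≤ 2 * L * D := by
    rw [hQ, hD, Finset.mul_sum]
    refine Finset.sum_le_sum fun k _ => ?_
    have h1 := hgradsq k (wk k)
    have h2 := hp k
    nlinarith
  -- P = D - Γ
  have hPD : P = D - Γ := by
    rw [hP, hD, hΓ]
    simp only [mul_sub]
    rw [Finset.sum_sub_distrib, Finset.sum_sub_distrib]
    ring
  -- the inner product bound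
  have hImain : -(2 * η) * I ≤ T + η ^ 2 * Q - 2 * η * P - μ * η * J := by
    have hIsum : I = ∑ k, p k * ⟪wbar - wstar, gradFk k (wk k)⟫ := by
      rw [hI, hgbar, inner_sum]
      exact Finset.sum_congr rfl fun k _ => real_inner_smul_right _ _ _
    have hk : ∀ k, -(2 * η) * ⟪wbar - wstar, gradFk k (wk k)⟫
        ≤ ‖wbar - wk k‖ ^ 2 + η ^ 2 * ‖gradFk k (wk k)‖ ^ 2
          - 2 * η * (Fk k (wk k) - Fk k wstar) - μ * η * ‖wk k - wstar‖ ^ 2 := by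
      intro k
      have hsplit : ⟪wbar - wstar, gradFk k (wk k)⟫
          = ⟪wbar - wk k, gradFk k (wk k)⟫ + ⟪wk k - wstar, gradFk k (wk k)⟫ := by
        rw [← inner_add_left, sub_add_sub_cancel]
      have hcs := abs_real_inner_le_norm (wbar - wk k) (gradFk k (wk k))
      have habs : -⟪wbar - wk k, gradFk k (wk k)⟫ ≤ ‖wbar - wk k‖ * ‖gradFk k (wk k)‖ :=
        (neg_le_abs _).trans hcs
      have hsck := hsc k wstar (wk k)
      have hic : ⟪gradFk k (wk k), wstar - wk k⟫ = -⟪wk k - wstar, gradFk k (wk k)⟫ := by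
        rw [real_inner_comm, show wstar - wk k = -(wk k - wstar) from by abel, inner_neg_left]
      rw [hic, norm_sub_rev wstar (wk k)] at hsck
      nlinarith [sq_nonneg (‖wbar - wk k‖ - η * ‖gradFk k (wk k)‖), hη.le,
        mul_le_mul_of_nonneg_left habs (by positivity : (0:ℝ) ≤ 2 * η)]
    calc -(2 * η) * I = ∑ k, p k * (-(2 * η) * ⟪wbar - wstar, gradFk k (wk k)⟫) := by
          rw [hIsum, Finset.mul_sum]; exact Finset.sum_congr rfl fun k _ => by ring
      _ ≤ ∑ k, (p k * ‖wbar - wk k‖ ^ 2 + η ^ 2 * (p k * ‖gradFk k (wk k)‖ ^ 2)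
            - 2 * η * (p k * (Fk k (wk k) - Fk k wstar))
            - μ * η * (p k * ‖wk k - wstar‖ ^ 2)) := by
          refine Finset.sum_le_sum fun k _ => ?_
          calc p k * (-(2 * η) * ⟪wbar - wstar, gradFk k (wk k)⟫)
              ≤ p k * (‖wbar - wk k‖ ^ 2 + η ^ 2 * ‖gradFk k (wk k)‖ ^ 2
                  - 2 * η * (Fk k (wk k) - Fk k wstar) - μ * η * ‖wk k - wstar‖ ^ 2) :=
                mul_le_mul_of_nonneg_left (hk k) (hp k)
            _ = p k * ‖wbar - wk k‖ ^ 2 + η ^ 2 * (p k * ‖gradFk k (wk k)‖ ^ 2)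
                - 2 * η * (p k * (Fk k (wk k) - Fk k wstar))
                - μ * η * (p k * ‖wk k - wstar‖ ^ 2) := by ring
      _ = T + η ^ 2 * Q - 2 * η * P - μ * η * J := by
          rw [hT, hQ, hP, hJ, Finset.mul_sum, Finset.mul_sum, Finset.mul_sum,
            ← Finset.sum_add_distrib, ← Finset.sum_sub_distrib, ← Finset.sum_sub_distrib]
  -- the D lower bound (no division)
  have hDsum : 2 * η * ((1 - η * L) * S) - T ≤ 2 * η * D := by
    have sclaim : ∀ k, 2 * η * ((1 - η * L) * (Fk k wbar - Fkstar k)) - ‖wbar - wk k‖ ^ 2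
        ≤ 2 * η * (Fk k (wk k) - Fkstar k) := by
      intro k
      have hconv := hsc k (wk k) wbar
      have hcs2 : -⟪gradFk k wbar, wk k - wbar⟫ ≤ ‖gradFk k wbar‖ * ‖wk k - wbar‖ :=
        (neg_le_abs _).trans (abs_real_inner_le_norm _ _)
      have hg2 := hgradsq k wbar
      have hnrev : ‖wk k - wbar‖ = ‖wbar - wk k‖ := norm_sub_rev _ _
      rw [hnrev] at hcs2 hconv
      nlinarith [sq_nonneg (η * ‖gradFk k wbar‖ - ‖wbar - wk k‖), hη.le,
        mul_le_mul_of_nonneg_left hcs2 (by positivity : (0:ℝ) ≤ 2 * η),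
        mul_le_mul_of_nonneg_left hg2 (sq_nonneg η),
        mul_le_mul_of_nonneg_left hconv.le (by positivity : (0:ℝ) ≤ 2 * η),
        mul_nonneg (mul_nonneg hη.le hμ.le) (sq_nonneg ‖wbar - wk k‖)]
    calc 2 * η * ((1 - η * L) * S) - T
        = ∑ k, (2 * η * ((1 - η * L) * (p k * (Fk k wbar - Fkstar k)))
            - p k * ‖wbar - wk k‖ ^ 2) := by
          rw [hS, hT, Finset.mul_sum, Finset.mul_sum, ← Finset.sum_sub_distrib]
      _ ≤ ∑ k, 2 * η * (p k * (Fk k (wk k) - Fkstar k)) := by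
          refine Finset.sum_le_sum fun k _ => ?_
          nlinarith [mul_le_mul_of_nonneg_left (sclaim k) (hp k)]
      _ = 2 * η * D := by rw [hD, Finset.mul_sum]
  -- S ≥ Γ and nonnegativity
  have hSΓ : Γ ≤ S := by
    have h1 := hmin wbar
    rw [hS, hΓ]
    simp only [mul_sub]
    rw [Finset.sum_sub_distrib]
    linarith
  have hΓ0 : 0 ≤ Γ := by
    have h1 : ∑ k, p k * Fkstar k ≤ ∑ k, p k * Fk k wstar :=
      Finset.sum_le_sum fun k _ => mul_le_mul_of_nonneg_left (hFkstar k wstar) (hp k)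
    rw [hΓ]; linarith
  have hT0 : 0 ≤ T := by
    rw [hT]; exact Finset.sum_nonneg fun k _ => mul_nonneg (hp k) (sq_nonneg _)
  -- final assembly
  have stepA : W - 2 * η * I + η ^ 2 * ‖gbar‖ ^ 2
      ≤ (1 - μ * η) * W + T + (4 * L * η ^ 2 - 2 * η) * D + 2 * η * Γ := by
    nlinarith [hImain, mul_le_mul_of_nonneg_left hgbQ (sq_nonneg η),
      mul_le_mul_of_nonneg_left hQD (sq_nonneg η),
      mul_le_mul_of_nonneg_left hJW (mul_nonneg hμ.le hη.le), hPD]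
  have stepB : (4 * L * η ^ 2 - 2 * η) * D + 2 * η * Γ ≤ 6 * L * η ^ 2 * Γ + T := by
    have h12 : 0 ≤ 1 - 2 * L * η := by nlinarith
    have h1L : 0 ≤ 1 - η * L := by nlinarith
    have hmul := mul_le_mul_of_nonneg_left hDsum h12
    have hSmul := mul_le_mul_of_nonneg_left hSΓ
      (mul_nonneg (mul_nonneg (by linarith : (0:ℝ) ≤ 2 * η) h12) h1L)
    nlinarith [mul_nonneg (mul_nonneg hL.le hη.le) hT0,
      mul_nonneg (mul_nonneg (mul_nonneg hL.le hL.le)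
        (mul_nonneg (mul_nonneg hη.le hη.le) hη.le)) hΓ0, hmul, hSmul, hT0, hΓ0]
  calc ‖(wbar - η • gbar) - wstar‖ ^ 2 = W - 2 * η * I + η ^ 2 * ‖gbar‖ ^ 2 := hexp
    _ ≤ (1 - μ * η) * W + T + (4 * L * η ^ 2 - 2 * η) * D + 2 * η * Γ := stepA
    _ ≤ (1 - μ * η) * W + 6 * L * η ^ 2 * Γ + 2 * T := by linarith [stepB]

private lemma integral_step {Ω : Type*} [MeasureSpace Ω]
    [IsProbabilityMeasure (ℙ : Measure Ω)] {d K : ℕ} (p : Fin K → ℝ)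
    (gk : Fin K → Ω → EuclideanSpace ℝ (Fin d))
    (w wstar gbar : EuclideanSpace ℝ (Fin d)) (η : ℝ) (hη : 0 < η)
    (hint : ∀ k, Integrable (gk k))
    (hint2 : Integrable fun ω => ‖(∑ k, p k • gk k ω) - gbar‖ ^ 2)
    (hunb : (∫ ω, ∑ k, p k • gk k ω) = gbar) :
    (∫ ω, ‖(w - η • ∑ k, p k • gk k ω) - wstar‖ ^ 2)
      = ‖(w - η • gbar) - wstar‖ ^ 2
        + η ^ 2 * ∫ ω, ‖(∑ k, p k • gk k ω) - gbar‖ ^ 2 := by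
  have hgint : Integrable (fun ω => ∑ k, p k • gk k ω) :=
    integrable_finset_sum _ (fun k _ => (hint k).smul (p k))
  have heint : Integrable (fun ω => (∑ k, p k • gk k ω) - gbar) :=
    hgint.sub (integrable_const _)
  have hemean : (∫ ω, ((∑ k, p k • gk k ω) - gbar)) = 0 := by
    rw [integral_sub hgint (integrable_const _), hunb]
    simp
  have hpt : ∀ ω, ‖(w - η • ∑ k, p k • gk k ω) - wstar‖ ^ 2
      = ‖(w - η • gbar) - wstar‖ ^ 2
        - (2 * η) * ⟪(w - η • gbar) - wstar, (∑ k, p k • gk k ω) - gbar⟫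
        + η ^ 2 * ‖(∑ k, p k • gk k ω) - gbar‖ ^ 2 := by
    intro ω
    have h1 : (w - η • ∑ k, p k • gk k ω) - wstar
        = ((w - η • gbar) - wstar) - η • ((∑ k, p k • gk k ω) - gbar) := by
      rw [smul_sub]; abel
    rw [h1, norm_sub_sq_real, real_inner_smul_right, norm_smul, Real.norm_eq_abs,
      abs_of_pos hη, mul_pow]
    ring
  calc (∫ ω, ‖(w - η • ∑ k, p k • gk k ω) - wstar‖ ^ 2)
      = ∫ ω, (‖(w - η • gbar) - wstar‖ ^ 2
        - (2 * η) * ⟪(w - η • gbar) - wstar, (∑ k, p k • gk k ω) - gbar⟫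
        + η ^ 2 * ‖(∑ k, p k • gk k ω) - gbar‖ ^ 2) :=
        integral_congr_ae (Filter.Eventually.of_forall hpt)
    _ = ‖(w - η • gbar) - wstar‖ ^ 2
        + η ^ 2 * ∫ ω, ‖(∑ k, p k • gk k ω) - gbar‖ ^ 2 := by
        have hB : Integrable (fun ω =>
            (2 * η) * ⟪(w - η • gbar) - wstar, (∑ k, p k • gk k ω) - gbar⟫) :=
          (heint.const_inner _).const_mul _
        have hA : Integrable (fun ω => ‖(w - η • gbar) - wstar‖ ^ 2
            - (2 * η) * ⟪(w - η • gbar) - wstar, (∑ k, p k • gk k ω) - gbar⟫) :=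
          (integrable_const _).sub hB
        rw [integral_add hA (hint2.const_mul _), integral_sub (integrable_const _) hB,
          integral_const_mul, integral_inner heint, hemean, integral_const_mul]
        simp


/-- One-step SGD progress lemma: under `L`-smoothness and `μ`-strong convexity of the locals
`F_k`, and stepsize `η ≤ 1/(4L)`, the averaged iterate `v̄_{t+1} = w̄_t - η g_t` satisfies
`E‖v̄_{t+1} - w*‖² ≤ (1 - μη)‖w̄_t - w*‖² + 6Lη²Γ + 2∑_k p_k ‖w̄_t - w_t^k‖² + η² E‖g_t - ḡ_t‖²`,
where `Γ = F* - ∑_k p_k F_k* ≥ 0`. -/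
theorem one_step_sgd_bound {Ω : Type*} [MeasureSpace Ω]
    [IsProbabilityMeasure (ℙ : Measure Ω)] {d K : ℕ}
    (Fk : Fin K → EuclideanSpace ℝ (Fin d) → ℝ)
    (gradFk : Fin K → EuclideanSpace ℝ (Fin d) → EuclideanSpace ℝ (Fin d))
    (Fkstar : Fin K → ℝ) (p : Fin K → ℝ) (L μ η : ℝ)
    (hL : 0 < L) (hμ : 0 < μ) (hη : 0 < η) (hη4L : η ≤ 1 / (4 * L))
    (hp : ∀ k, 0 ≤ p k) (hpsum : ∑ k, p k = 1)
    (hgrad : ∀ k w, HasGradientAt (Fk k) (gradFk k w) w)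
    (hsmooth : ∀ k v w, Fk k v ≤ Fk k w + ⟪gradFk k w, v - w⟫ + L / 2 * ‖v - w‖ ^ 2)
    (hsc : ∀ k v w, Fk k v ≥ Fk k w + ⟪gradFk k w, v - w⟫ + μ / 2 * ‖v - w‖ ^ 2)
    (hFkstar : ∀ k w, Fkstar k ≤ Fk k w) (hattain : ∀ k, ∃ w, Fk k w = Fkstar k)
    (wstar : EuclideanSpace ℝ (Fin d))
    (hmin : ∀ w, ∑ k, p k * Fk k wstar ≤ ∑ k, p k * Fk k w)
    -- current local iterates (conditioning on the past, they are deterministic)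
    (wk : Fin K → EuclideanSpace ℝ (Fin d))
    -- stochastic local gradients, unbiased with the true gradients as means
    (gk : Fin K → Ω → EuclideanSpace ℝ (Fin d))
    (hint : ∀ k, Integrable (gk k))
    (hint2 : Integrable fun ω =>
      ‖(∑ k, p k • gk k ω) - ∑ k, p k • gradFk k (wk k)‖ ^ 2)
    (hunbiased : ∀ k, (∫ ω, gk k ω) = gradFk k (wk k)) :
    (∫ ω, ‖((∑ k, p k • wk k) - η • ∑ k, p k • gk k ω) - wstar‖ ^ 2) ≤
      (1 - μ * η) * ‖(∑ k, p k • wk k) - wstar‖ ^ 2 +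
        6 * L * η ^ 2 * ((∑ k, p k * Fk k wstar) - ∑ k, p k * Fkstar k) +
        2 * ∑ k, p k * ‖(∑ j, p j • wk j) - wk k‖ ^ 2 +
        η ^ 2 * ∫ ω, ‖(∑ k, p k • gk k ω) - ∑ k, p k • gradFk k (wk k)‖ ^ 2 := by
  have hmean : (∫ ω, ∑ k, p k • gk k ω) = ∑ k, p k • gradFk k (wk k) := by
    rw [integral_finset_sum (μ := ℙ) Finset.univ
      (f := fun k (ω : Ω) => p k • gk k ω) (fun k _ => (hint k).smul (p k))]
    exact Finset.sum_congr rfl fun k _ => by rw [integral_smul, hunbiased]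
  have hstep := integral_step p gk (∑ k, p k • wk k) wstar
    (∑ k, p k • gradFk k (wk k)) η hη hint hint2 hmean
  have hdet := det_bound Fk gradFk Fkstar p L μ η hL hμ hη hη4L hp hpsum
    hsmooth hsc hFkstar wstar hmin wk
  rw [hstep]
  linarith
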